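/- (Flat case: the associativity constraint on b.) Under the setup of a submanifold with potential of normals with h_{ij}(u) = η_{ij} constant invertible symmetric and g_{ij}(u) = c₀ η_{ij}, c₀ ≠ 0 constant, the coefficients b^k_{ij} satisfy the associativity (WDVV-type) identity Σ_s b^s_{ij}(u) b^k_{sl}(u) = Σ_s b^s_{il}(u) b^k_{sj}(u) for all indices i,j,k,l and all u ∈ U. -/

import Mathlib

/-- Partial derivative in the `i`-th coordinate direction. -/
noncomputable def pd {N : ℕ} {E : Type*} [NormedAddCommGroup E] [NormedSpace ℝ E]
    (i : Fin N) (f : (Fin N → ℝ) → E) (u : Fin N → ℝ) : E :=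
  fderiv ℝ f u (Pi.single i 1)

/-- The pseudo-Euclidean scalar product `B(x,y) = xᵀ G y` on `ℝ^m`. -/
def Bform {m : ℕ} (G : Matrix (Fin m) (Fin m) ℝ) (x y : Fin m → ℝ) : ℝ :=
  ∑ i, ∑ j, x i * G i j * y j

open scoped Topology

section Helpers

variable {N : ℕ} {E : Type*} [NormedAddCommGroup E] [NormedSpace ℝ E]

lemma pd_congr {f g : (Fin N → ℝ) → E} {u : Fin N → ℝ} (h : f =ᶠ[𝓝 u] g) (i : Fin N) :
    pd i f u = pd i g u := by
  unfold pd; rw [h.fderiv_eq]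

lemma pd_congr_on {U : Set (Fin N → ℝ)} (hU : IsOpen U) {u : Fin N → ℝ} (hu : u ∈ U)
    {f g : (Fin N → ℝ) → E} (h : ∀ v ∈ U, f v = g v) (i : Fin N) : pd i f u = pd i g u :=
  pd_congr (by filter_upwards [hU.mem_nhds hu] with v hv using h v hv) i

lemma contDiffOn_pd {U : Set (Fin N → ℝ)} (hU : IsOpen U) {f : (Fin N → ℝ) → E}
    (hf : ContDiffOn ℝ (⊤ : ℕ∞) f U) (i : Fin N) : ContDiffOn ℝ (⊤ : ℕ∞) (pd i f) U := by
  have h1 : ContDiffOn ℝ (⊤ : ℕ∞) (fderiv ℝ f) U := hf.fderiv_of_isOpen hU (by simp)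
  exact (ContinuousLinearMap.apply ℝ E (Pi.single i 1)).contDiff.comp_contDiffOn h1

lemma diffAt_of_contDiffOn {U : Set (Fin N → ℝ)} (hU : IsOpen U) {u : Fin N → ℝ} (hu : u ∈ U)
    {f : (Fin N → ℝ) → E} (hf : ContDiffOn ℝ (⊤ : ℕ∞) f U) : DifferentiableAt ℝ f u :=
  ((hf u hu).contDiffAt (hU.mem_nhds hu)).differentiableAt (by simp)

lemma pd_comm {U : Set (Fin N → ℝ)} (hU : IsOpen U) {u : Fin N → ℝ} (hu : u ∈ U)
    {f : (Fin N → ℝ) → E} (hf : ContDiffOn ℝ (⊤ : ℕ∞) f U) (i j : Fin N) :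
    pd i (pd j f) u = pd j (pd i f) u := by
  have hf' : ContDiffOn ℝ (⊤ : ℕ∞) (fderiv ℝ f) U := hf.fderiv_of_isOpen hU (by simp)
  have hd : DifferentiableAt ℝ (fderiv ℝ f) u := diffAt_of_contDiffOn hU hu hf'
  have hev : ∀ᶠ y in 𝓝 u, HasFDerivAt f (fderiv ℝ f y) y := by
    filter_upwards [hU.mem_nhds hu] with y hy
    exact (diffAt_of_contDiffOn hU hy hf).hasFDerivAt
  have hsymm := second_derivative_symmetric_of_eventually hev hd.hasFDerivAt
  have key : ∀ m l : Fin N, pd m (pd l f) u =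
      fderiv ℝ (fderiv ℝ f) u (Pi.single m 1) (Pi.single l 1) := by
    intro m l
    rw [show pd m (pd l f) u = fderiv ℝ (fun v => (fderiv ℝ f v) (Pi.single l 1)) u
        (Pi.single m 1) from rfl]
    rw [fderiv_clm_apply hd (differentiableAt_const _)]
    simp
  rw [key i j, key j i, hsymm]

lemma pd_const (i : Fin N) (c : E) (u : Fin N → ℝ) : pd i (fun _ => c) u = 0 := by
  unfold pd; rw [fderiv_const_apply]; simp

lemma pd_add {f g : (Fin N → ℝ) → E} {u : Fin N → ℝ} (hf : DifferentiableAt ℝ f u)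
    (hg : DifferentiableAt ℝ g u) (i : Fin N) :
    pd i (fun v => f v + g v) u = pd i f u + pd i g u := by
  unfold pd; rw [fderiv_fun_add hf hg]; simp

lemma pd_sum {ι : Type*} (s : Finset ι) {f : ι → (Fin N → ℝ) → E} {u : Fin N → ℝ}
    (hf : ∀ k ∈ s, DifferentiableAt ℝ (f k) u) (i : Fin N) :
    pd i (fun v => ∑ k ∈ s, f k v) u = ∑ k ∈ s, pd i (f k) u := by
  unfold pd; rw [fderiv_fun_sum hf]; simp

lemma pd_mul {f g : (Fin N → ℝ) → ℝ} {u : Fin N → ℝ} (hf : DifferentiableAt ℝ f u)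
    (hg : DifferentiableAt ℝ g u) (i : Fin N) :
    pd i (fun v => f v * g v) u = pd i f u * g u + f u * pd i g u := by
  unfold pd; rw [fderiv_fun_mul hf hg]; simp; ring

lemma pd_smul {f : (Fin N → ℝ) → ℝ} {g : (Fin N → ℝ) → E} {u : Fin N → ℝ}
    (hf : DifferentiableAt ℝ f u) (hg : DifferentiableAt ℝ g u) (i : Fin N) :
    pd i (fun v => f v • g v) u = pd i f u • g u + f u • pd i g u := by
  unfold pd; rw [fderiv_fun_smul hf hg]; simp [add_comm]

lemma pd_apply {m : ℕ} {f : (Fin N → ℝ) → (Fin m → ℝ)} {u : Fin N → ℝ}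
    (hf : DifferentiableAt ℝ f u) (i : Fin N) (a : Fin m) :
    pd i f u a = pd i (fun v => f v a) u := by
  have h := ((ContinuousLinearMap.proj (R := ℝ) (φ := fun _ : Fin m => ℝ) a).hasFDerivAt
      (x := f u)).comp u hf.hasFDerivAt
  have h2 : fderiv ℝ (fun v => f v a) u = (ContinuousLinearMap.proj a).comp (fderiv ℝ f u) :=
    h.fderiv
  show fderiv ℝ f u (Pi.single i 1) a = fderiv ℝ (fun v => f v a) u (Pi.single i 1)
  rw [h2]; rfl

lemma diff_apply {m : ℕ} {f : (Fin N → ℝ) → (Fin m → ℝ)} {u : Fin N → ℝ}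
    (hf : DifferentiableAt ℝ f u) (a : Fin m) : DifferentiableAt ℝ (fun v => f v a) u :=
  ((ContinuousLinearMap.proj (R := ℝ) (φ := fun _ : Fin m => ℝ) a).differentiableAt).comp u hf

-- Bform algebra
lemma Bform_zero_left {m : ℕ} (G : Matrix (Fin m) (Fin m) ℝ) (w : Fin m → ℝ) :
    Bform G 0 w = 0 := by simp [Bform]

lemma Bform_zero_right {m : ℕ} (G : Matrix (Fin m) (Fin m) ℝ) (w : Fin m → ℝ) :
    Bform G w 0 = 0 := by simp [Bform]

lemma Bform_add_left {m : ℕ} (G : Matrix (Fin m) (Fin m) ℝ) (x y w : Fin m → ℝ) :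
    Bform G (x + y) w = Bform G x w + Bform G y w := by
  unfold Bform
  rw [← Finset.sum_add_distrib]
  refine Finset.sum_congr rfl fun i _ => ?_
  rw [← Finset.sum_add_distrib]
  exact Finset.sum_congr rfl fun j _ => by simp [Pi.add_apply]; ring

lemma Bform_add_right {m : ℕ} (G : Matrix (Fin m) (Fin m) ℝ) (w x y : Fin m → ℝ) :
    Bform G w (x + y) = Bform G w x + Bform G w y := by
  unfold Bform
  rw [← Finset.sum_add_distrib]
  refine Finset.sum_congr rfl fun i _ => ?_
  rw [← Finset.sum_add_distrib]
  exact Finset.sum_congr rfl fun j _ => by simp [Pi.add_apply]; ring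

lemma Bform_smul_left {m : ℕ} (G : Matrix (Fin m) (Fin m) ℝ) (c : ℝ) (x w : Fin m → ℝ) :
    Bform G (c • x) w = c * Bform G x w := by
  unfold Bform
  rw [Finset.mul_sum]
  refine Finset.sum_congr rfl fun i _ => ?_
  rw [Finset.mul_sum]
  exact Finset.sum_congr rfl fun j _ => by simp [Pi.smul_apply]; ring

lemma Bform_smul_right {m : ℕ} (G : Matrix (Fin m) (Fin m) ℝ) (c : ℝ) (w x : Fin m → ℝ) :
    Bform G w (c • x) = c * Bform G w x := by
  unfold Bform
  rw [Finset.mul_sum]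
  refine Finset.sum_congr rfl fun i _ => ?_
  rw [Finset.mul_sum]
  exact Finset.sum_congr rfl fun j _ => by simp [Pi.smul_apply]; ring

lemma Bform_sum_smul_left {m : ℕ} (G : Matrix (Fin m) (Fin m) ℝ) {ι : Type*} (s : Finset ι)
    (x : ι → ℝ) (v : ι → Fin m → ℝ) (w : Fin m → ℝ) :
    Bform G (∑ k ∈ s, x k • v k) w = ∑ k ∈ s, x k * Bform G (v k) w := by
  classical
  induction s using Finset.cons_induction with
  | empty => simp [Bform_zero_left]
  | cons k s hk ih =>
      rw [Finset.sum_cons, Finset.sum_cons, Bform_add_left, Bform_smul_left, ih]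

lemma Bform_sum_smul_right {m : ℕ} (G : Matrix (Fin m) (Fin m) ℝ) {ι : Type*} (s : Finset ι)
    (x : ι → ℝ) (v : ι → Fin m → ℝ) (w : Fin m → ℝ) :
    Bform G w (∑ k ∈ s, x k • v k) = ∑ k ∈ s, x k * Bform G w (v k) := by
  classical
  induction s using Finset.cons_induction with
  | empty => simp [Bform_zero_right]
  | cons k s hk ih =>
      rw [Finset.sum_cons, Finset.sum_cons, Bform_add_right, Bform_smul_right, ih]

lemma Bform_comm {m : ℕ} {G : Matrix (Fin m) (Fin m) ℝ} (hG : G.transpose = G)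
    (x y : Fin m → ℝ) : Bform G x y = Bform G y x := by
  unfold Bform
  rw [Finset.sum_comm]
  refine Finset.sum_congr rfl fun i _ => Finset.sum_congr rfl fun j _ => ?_
  have h2 : G j i = G i j := congrFun (congrFun hG i) j
  rw [h2]; ring

/-- Derivative of a `Bform` pairing of two differentiable maps. -/
lemma pd_Bform {mm : ℕ} (G : Matrix (Fin mm) (Fin mm) ℝ)
    {f g : (Fin N → ℝ) → (Fin mm → ℝ)} {u : Fin N → ℝ}
    (hf : DifferentiableAt ℝ f u) (hg : DifferentiableAt ℝ g u) (l : Fin N) :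
    pd l (fun v => Bform G (f v) (g v)) u
      = Bform G (pd l f u) (g u) + Bform G (f u) (pd l g u) := by
  have hfc : ∀ i, DifferentiableAt ℝ (fun v => f v i) u := fun i => diff_apply hf i
  have hgc : ∀ j, DifferentiableAt ℝ (fun v => g v j) u := fun j => diff_apply hg j
  have hterm : ∀ i j, DifferentiableAt ℝ (fun v => f v i * G i j * g v j) u := fun i j =>
    ((hfc i).mul (differentiableAt_const _)).mul (hgc j)
  have hrow : ∀ i : Fin mm, DifferentiableAt ℝ (fun v => ∑ j, f v i * G i j * g v j) u :=
    fun i => DifferentiableAt.fun_sum (fun j _ => hterm i j)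
  have step : pd l (fun v => Bform G (f v) (g v)) u
      = ∑ i, ∑ j, pd l (fun v => f v i * G i j * g v j) u := by
    rw [show (fun v => Bform G (f v) (g v)) = fun v => ∑ i, ∑ j, f v i * G i j * g v j from rfl]
    rw [pd_sum _ (fun i _ => hrow i) l]
    exact Finset.sum_congr rfl fun i _ => pd_sum _ (fun j _ => hterm i j) l
  have tstep : ∀ i j, pd l (fun v => f v i * G i j * g v j) u
      = (pd l (fun v => f v i) u * G i j) * g u j + (f u i * G i j) * pd l (fun v => g v j) u := by
    intro i j
    rw [pd_mul ((hfc i).fun_mul (differentiableAt_const _)) (hgc j) l]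
    rw [pd_mul (hfc i) (differentiableAt_const _) l, pd_const]
    ring
  rw [step]
  unfold Bform
  rw [← Finset.sum_add_distrib]
  refine Finset.sum_congr rfl fun i _ => ?_
  rw [← Finset.sum_add_distrib]
  refine Finset.sum_congr rfl fun j _ => ?_
  rw [tstep i j, pd_apply hf l i, pd_apply hg l j]

lemma vec_eq_zero {n : ℕ} {η : Matrix (Fin n) (Fin n) ℝ} (hηdet : η.det ≠ 0) {x : Fin n → ℝ}
    (h : ∀ m, ∑ k, x k * η k m = 0) (k₀ : Fin n) : x k₀ = 0 := by
  have hx : Matrix.vecMul x η = 0 := by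
    funext m; simpa [Matrix.vecMul, dotProduct] using h m
  have hℓ := congrArg (fun y => Matrix.vecMul y η⁻¹) hx
  simp only [Matrix.vecMul_vecMul] at hℓ
  rw [Matrix.mul_nonsing_inv η (isUnit_iff_ne_zero.mpr hηdet)] at hℓ
  simpa using congrFun hℓ k₀

lemma coeffs_zero {n m : ℕ} {R S : Fin n → Fin m → ℝ}
    (hli : LinearIndependent ℝ (Sum.elim R S)) {x y : Fin n → ℝ}
    (h : ((∑ k, x k • R k) + ∑ k, y k • S k) = 0) : (∀ k, x k = 0) ∧ (∀ k, y k = 0) := by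
  have h2 : ∑ p : Fin n ⊕ Fin n, Sum.elim x y p • Sum.elim R S p = 0 := by
    rw [Fintype.sum_sum_type]; simpa using h
  have key := Fintype.linearIndependent_iff.mp hli (Sum.elim x y) h2
  exact ⟨fun k => key (Sum.inl k), fun k => key (Sum.inr k)⟩

end Helpers

/-- `X^k_{ij}` is written `X i j k`. -/
theorem stmt17
    (N : ℕ) (hN : 1 ≤ N)
    (G : Matrix (Fin (2 * N)) (Fin (2 * N)) ℝ)
    (hGsymm : G.transpose = G) (hGdet : G.det ≠ 0)
    (U : Set (Fin N → ℝ)) (hU : IsOpen U)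
    (r n : (Fin N → ℝ) → (Fin (2 * N) → ℝ))
    (hr : ContDiffOn ℝ (⊤ : ℕ∞) r U) (hn : ContDiffOn ℝ (⊤ : ℕ∞) n U)
    (hbasis : ∀ u ∈ U,
      LinearIndependent ℝ (Sum.elim (fun i : Fin N => pd i r u) (fun j : Fin N => pd j n u)) ∧
      Submodule.span ℝ
        (Set.range (Sum.elim (fun i : Fin N => pd i r u) (fun j : Fin N => pd j n u))) = ⊤)
    (horth : ∀ u ∈ U, ∀ i j : Fin N, Bform G (pd i r u) (pd j n u) = 0)
    -- flatness: h = η constant symmetric invertible, g = c₀ η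
    (η : Matrix (Fin N) (Fin N) ℝ) (hηsymm : η.transpose = η) (hηdet : η.det ≠ 0)
    (c₀ : ℝ) (hc₀ : c₀ ≠ 0)
    (hflat_h : ∀ u ∈ U, ∀ i j : Fin N, Bform G (pd i n u) (pd j n u) = η i j)
    (hflat_g : ∀ u ∈ U, ∀ i j : Fin N, Bform G (pd i r u) (pd j r u) = c₀ * η i j)
    (a b c d : Fin N → Fin N → Fin N → (Fin N → ℝ) → ℝ)
    (hsmooth : ∀ i j k : Fin N,
      ContDiffOn ℝ (⊤ : ℕ∞) (a i j k) U ∧ ContDiffOn ℝ (⊤ : ℕ∞) (b i j k) U ∧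
      ContDiffOn ℝ (⊤ : ℕ∞) (c i j k) U ∧ ContDiffOn ℝ (⊤ : ℕ∞) (d i j k) U)
    (hGauss : ∀ u ∈ U, ∀ i j : Fin N,
      pd i (pd j r) u =
        (∑ k, a i j k u • pd k r u) + ∑ k, b i j k u • pd k n u)
    (hWeingarten : ∀ u ∈ U, ∀ i j : Fin N,
      pd i (pd j n) u =
        (∑ k, c i j k u • pd k r u) + ∑ k, d i j k u • pd k n u) :
    ∀ u ∈ U, ∀ i j k l : Fin N,
      ∑ s, b i j s u * b s l k u = ∑ s, b i l s u * b s j k u := by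
  classical
  -- differentiability bookkeeping
  have hpdr : ∀ j, ContDiffOn ℝ (⊤ : ℕ∞) (pd j r) U := fun j => contDiffOn_pd hU hr j
  have hpdn : ∀ j, ContDiffOn ℝ (⊤ : ℕ∞) (pd j n) U := fun j => contDiffOn_pd hU hn j
  have dr : ∀ v ∈ U, ∀ j, DifferentiableAt ℝ (pd j r) v :=
    fun v hv j => diffAt_of_contDiffOn hU hv (hpdr j)
  have dn : ∀ v ∈ U, ∀ j, DifferentiableAt ℝ (pd j n) v :=
    fun v hv j => diffAt_of_contDiffOn hU hv (hpdn j)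
  have ddr : ∀ v ∈ U, ∀ i j, DifferentiableAt ℝ (pd i (pd j r)) v :=
    fun v hv i j => diffAt_of_contDiffOn hU hv (contDiffOn_pd hU (hpdr j) i)
  have ddn : ∀ v ∈ U, ∀ i j, DifferentiableAt ℝ (pd i (pd j n)) v :=
    fun v hv i j => diffAt_of_contDiffOn hU hv (contDiffOn_pd hU (hpdn j) i)
  have da : ∀ v ∈ U, ∀ i j k, DifferentiableAt ℝ (a i j k) v :=
    fun v hv i j k => diffAt_of_contDiffOn hU hv (hsmooth i j k).1
  have db : ∀ v ∈ U, ∀ i j k, DifferentiableAt ℝ (b i j k) v :=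
    fun v hv i j k => diffAt_of_contDiffOn hU hv (hsmooth i j k).2.1
  -- coefficient uniqueness
  have huniq : ∀ v ∈ U, ∀ x y : Fin N → ℝ,
      ((∑ k, x k • pd k r v) + ∑ k, y k • pd k n v) = 0 →
      (∀ k, x k = 0) ∧ (∀ k, y k = 0) :=
    fun v hv x y h => coeffs_zero (hbasis v hv).1 h
  -- symmetry of a, b in the lower indices
  have hsym_ab : ∀ v ∈ U, ∀ i j k₀, a i j k₀ v = a j i k₀ v ∧ b i j k₀ v = b j i k₀ v := by
    intro v hv i j k₀
    have hc := pd_comm hU hv hr i j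
    have h0 : ((∑ k, (a i j k v - a j i k v) • pd k r v)
        + ∑ k, (b i j k v - b j i k v) • pd k n v) = 0 := by
      simp only [sub_smul]
      rw [Finset.sum_sub_distrib, Finset.sum_sub_distrib, sub_add_sub_comm, sub_eq_zero,
        ← hGauss v hv i j, ← hGauss v hv j i]
      exact hc
    have h1 := huniq v hv _ _ h0
    exact ⟨sub_eq_zero.mp (h1.1 k₀), sub_eq_zero.mp (h1.2 k₀)⟩
  have hsym_cd : ∀ v ∈ U, ∀ i j k₀, c i j k₀ v = c j i k₀ v ∧ d i j k₀ v = d j i k₀ v := by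
    intro v hv i j k₀
    have hc := pd_comm hU hv hn i j
    have h0 : ((∑ k, (c i j k v - c j i k v) • pd k r v)
        + ∑ k, (d i j k v - d j i k v) • pd k n v) = 0 := by
      simp only [sub_smul]
      rw [Finset.sum_sub_distrib, Finset.sum_sub_distrib, sub_add_sub_comm, sub_eq_zero,
        ← hWeingarten v hv i j, ← hWeingarten v hv j i]
      exact hc
    have h1 := huniq v hv _ _ h0
    exact ⟨sub_eq_zero.mp (h1.1 k₀), sub_eq_zero.mp (h1.2 k₀)⟩
  -- pairings of second derivatives with the frame, via Gauss/Weingarten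
  have hBr : ∀ v ∈ U, ∀ i j m, Bform G (pd i (pd j r) v) (pd m r v)
      = c₀ * ∑ k, a i j k v * η k m := by
    intro v hv i j m
    rw [hGauss v hv i j, Bform_add_left, Bform_sum_smul_left, Bform_sum_smul_left]
    have h1 : ∀ k : Fin N, Bform G (pd k r v) (pd m r v) = c₀ * η k m :=
      fun k => hflat_g v hv k m
    have h2 : ∀ k : Fin N, Bform G (pd k n v) (pd m r v) = 0 := fun k => by
      rw [Bform_comm hGsymm]; exact horth v hv m k
    simp only [h1, h2, mul_zero, Finset.sum_const_zero, add_zero, Finset.mul_sum]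
    exact Finset.sum_congr rfl fun k _ => by ring
  have hBn : ∀ v ∈ U, ∀ i j m, Bform G (pd i (pd j r) v) (pd m n v)
      = ∑ k, b i j k v * η k m := by
    intro v hv i j m
    rw [hGauss v hv i j, Bform_add_left, Bform_sum_smul_left, Bform_sum_smul_left]
    have h1 : ∀ k : Fin N, Bform G (pd k r v) (pd m n v) = 0 := fun k => horth v hv k m
    have h2 : ∀ k : Fin N, Bform G (pd k n v) (pd m n v) = η k m := fun k => hflat_h v hv k m
    simp only [h1, h2, mul_zero, Finset.sum_const_zero, zero_add]
  have hNr : ∀ v ∈ U, ∀ i j m, Bform G (pd i (pd j n) v) (pd m r v)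
      = c₀ * ∑ k, c i j k v * η k m := by
    intro v hv i j m
    rw [hWeingarten v hv i j, Bform_add_left, Bform_sum_smul_left, Bform_sum_smul_left]
    have h1 : ∀ k : Fin N, Bform G (pd k r v) (pd m r v) = c₀ * η k m :=
      fun k => hflat_g v hv k m
    have h2 : ∀ k : Fin N, Bform G (pd k n v) (pd m r v) = 0 := fun k => by
      rw [Bform_comm hGsymm]; exact horth v hv m k
    simp only [h1, h2, mul_zero, Finset.sum_const_zero, add_zero, Finset.mul_sum]
    exact Finset.sum_congr rfl fun k _ => by ring
  have hNn : ∀ v ∈ U, ∀ i j m, Bform G (pd i (pd j n) v) (pd m n v)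
      = ∑ k, d i j k v * η k m := by
    intro v hv i j m
    rw [hWeingarten v hv i j, Bform_add_left, Bform_sum_smul_left, Bform_sum_smul_left]
    have h1 : ∀ k : Fin N, Bform G (pd k r v) (pd m n v) = 0 := fun k => horth v hv k m
    have h2 : ∀ k : Fin N, Bform G (pd k n v) (pd m n v) = η k m := fun k => hflat_h v hv k m
    simp only [h1, h2, mul_zero, Finset.sum_const_zero, zero_add]
  -- differentiating the constant pairings
  have hT : ∀ v ∈ U, ∀ i j m, Bform G (pd i (pd j r) v) (pd m r v)
      + Bform G (pd i (pd m r) v) (pd j r v) = 0 := by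
    intro v hv i j m
    have h1 := pd_Bform G (dr v hv j) (dr v hv m) i (u := v)
    have h2 : pd i (fun w => Bform G (pd j r w) (pd m r w)) v = 0 := by
      rw [pd_congr_on hU hv (fun w hw => hflat_g w hw j m) i, pd_const]
    rw [h2] at h1
    rw [Bform_comm hGsymm (pd j r v) (pd i (pd m r) v)] at h1
    linarith [h1]
  have hS : ∀ v ∈ U, ∀ i j m, Bform G (pd i (pd j n) v) (pd m n v)
      + Bform G (pd i (pd m n) v) (pd j n v) = 0 := by
    intro v hv i j m
    have h1 := pd_Bform G (dn v hv j) (dn v hv m) i (u := v)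
    have h2 : pd i (fun w => Bform G (pd j n w) (pd m n w)) v = 0 := by
      rw [pd_congr_on hU hv (fun w hw => hflat_h w hw j m) i, pd_const]
    rw [h2] at h1
    rw [Bform_comm hGsymm (pd j n v) (pd i (pd m n) v)] at h1
    linarith [h1]
  have hM : ∀ v ∈ U, ∀ l i j, Bform G (pd l (pd i r) v) (pd j n v)
      + Bform G (pd l (pd j n) v) (pd i r v) = 0 := by
    intro v hv l i j
    have h1 := pd_Bform G (dr v hv i) (dn v hv j) l (u := v)
    have h2 : pd l (fun w => Bform G (pd i r w) (pd j n w)) v = 0 := by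
      rw [pd_congr_on hU hv (fun w hw => horth w hw i j) l, pd_const]
    rw [h2] at h1
    rw [Bform_comm hGsymm (pd i r v) (pd l (pd j n) v)] at h1
    linarith [h1]
  -- a vanishes
  have haz : ∀ v ∈ U, ∀ i j k₀, a i j k₀ v = 0 := by
    intro v hv i j k₀
    have R1 : ∀ i' j' m, Bform G (pd i' (pd j' r) v) (pd m r v)
        = Bform G (pd j' (pd i' r) v) (pd m r v) := by
      intro i' j' m; rw [pd_comm hU hv hr i' j']
    have R2 : ∀ i' j' m, Bform G (pd i' (pd j' r) v) (pd m r v)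
        = - Bform G (pd i' (pd m r) v) (pd j' r v) := by
      intro i' j' m; linarith [hT v hv i' j' m]
    have key : ∀ m, Bform G (pd i (pd j r) v) (pd m r v) = 0 := by
      intro m
      have e : Bform G (pd i (pd j r) v) (pd m r v)
          = - Bform G (pd i (pd j r) v) (pd m r v) := by
        calc Bform G (pd i (pd j r) v) (pd m r v)
            = Bform G (pd j (pd i r) v) (pd m r v) := R1 i j m
          _ = - Bform G (pd j (pd m r) v) (pd i r v) := R2 j i m
          _ = - Bform G (pd m (pd j r) v) (pd i r v) := by rw [R1 j m i]
          _ = Bform G (pd m (pd i r) v) (pd j r v) := by have := R2 m j i; linarith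
          _ = Bform G (pd i (pd m r) v) (pd j r v) := by rw [R1 m i j]
          _ = - Bform G (pd i (pd j r) v) (pd m r v) := by have := R2 i m j; linarith
      linarith
    have hz : ∀ m, ∑ k, a i j k v * η k m = 0 := by
      intro m
      have h0 := hBr v hv i j m
      rw [key m] at h0
      exact (mul_eq_zero.mp h0.symm).resolve_left hc₀
    exact vec_eq_zero hηdet hz k₀
  -- d vanishes
  have hdz : ∀ v ∈ U, ∀ i j k₀, d i j k₀ v = 0 := by
    intro v hv i j k₀
    have R1 : ∀ i' j' m, Bform G (pd i' (pd j' n) v) (pd m n v)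
        = Bform G (pd j' (pd i' n) v) (pd m n v) := by
      intro i' j' m; rw [pd_comm hU hv hn i' j']
    have R2 : ∀ i' j' m, Bform G (pd i' (pd j' n) v) (pd m n v)
        = - Bform G (pd i' (pd m n) v) (pd j' n v) := by
      intro i' j' m; linarith [hS v hv i' j' m]
    have key : ∀ m, Bform G (pd i (pd j n) v) (pd m n v) = 0 := by
      intro m
      have e : Bform G (pd i (pd j n) v) (pd m n v)
          = - Bform G (pd i (pd j n) v) (pd m n v) := by
        calc Bform G (pd i (pd j n) v) (pd m n v)
            = Bform G (pd j (pd i n) v) (pd m n v) := R1 i j m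
          _ = - Bform G (pd j (pd m n) v) (pd i n v) := R2 j i m
          _ = - Bform G (pd m (pd j n) v) (pd i n v) := by rw [R1 j m i]
          _ = Bform G (pd m (pd i n) v) (pd j n v) := by have := R2 m j i; linarith
          _ = Bform G (pd i (pd m n) v) (pd j n v) := by rw [R1 m i j]
          _ = - Bform G (pd i (pd j n) v) (pd m n v) := by have := R2 i m j; linarith
      linarith
    have hz : ∀ m, ∑ k, d i j k v * η k m = 0 := by
      intro m
      have := hNn v hv i j m
      rw [key m] at this
      exact this.symm
    exact vec_eq_zero hηdet hz k₀
  -- the relation between b and c : Σ_k b l i k η k j + c₀ Σ_k c l j k η k i = 0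
  have hstar : ∀ v ∈ U, ∀ l i j,
      (∑ k, b l i k v * η k j) + c₀ * ∑ k, c l j k v * η k i = 0 := by
    intro v hv l i j
    have h1 := hM v hv l i j
    rw [hBn v hv l i j, hNr v hv l j i] at h1
    linarith
  -- b = -c₀ c
  have hbc : ∀ v ∈ U, ∀ l j k₀, b l j k₀ v = -c₀ * c l j k₀ v := by
    intro v hv l j k₀
    set β : Fin N → Fin N → Fin N → ℝ := fun l i j => ∑ k, b l i k v * η k j with hβ
    have hβ12 : ∀ l' i' j', β l' i' j' = β i' l' j' := by
      intro l' i' j'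
      exact Finset.sum_congr rfl fun k _ => by rw [(hsym_ab v hv l' i' k).2]
    have hstar' : ∀ l' i' j', β l' i' j' = - (c₀ * ∑ k, c l' j' k v * η k i') := by
      intro l' i' j'; have := hstar v hv l' i' j'; linarith
    have hβ13 : ∀ l' i' j', β l' i' j' = β j' i' l' := by
      intro l' i' j'
      rw [hstar' l' i' j', hstar' j' i' l']
      have : ∀ k, c l' j' k v = c j' l' k v := fun k => (hsym_cd v hv l' j' k).1
      congr 1
      congr 1
      exact Finset.sum_congr rfl fun k _ => by rw [this k]
    have hβ23 : ∀ l' i' j', β l' i' j' = β l' j' i' := by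
      intro l' i' j'
      rw [hβ12 l' i' j', hβ13 i' l' j', hβ12 j' l' i']
    have hz : ∀ m, ∑ k, (b l j k v + c₀ * c l j k v) * η k m = 0 := by
      intro m
      have e1 : ∑ k, (b l j k v + c₀ * c l j k v) * η k m
          = β l j m + c₀ * ∑ k, c l j k v * η k m := by
        rw [hβ, Finset.mul_sum, ← Finset.sum_add_distrib]
        exact Finset.sum_congr rfl fun k _ => by ring
      rw [e1, hβ23 l j m]
      have := hstar v hv l m j
      linarith
    have := vec_eq_zero hηdet hz k₀
    linarith
  -- now work at the point u
  intro u hu i j k l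
  -- third-derivative expansion
  have key3 : ∀ l' i' j', pd l' (pd i' (pd j' r)) u
      = (∑ m, (∑ s, b i' j' s u * c l' s m u) • pd m r u)
        + ∑ s, (pd l' (b i' j' s) u) • pd s n u := by
    intro l' i' j'
    have h1 : pd l' (pd i' (pd j' r)) u
        = pd l' (fun v => (∑ s, a i' j' s v • pd s r v) + ∑ s, b i' j' s v • pd s n v) u :=
      pd_congr_on hU hu (fun v hv => hGauss v hv i' j') l'
    have dterm1 : ∀ s : Fin N, DifferentiableAt ℝ (fun v => a i' j' s v • pd s r v) u :=
      fun s => (da u hu i' j' s).smul (dr u hu s)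
    have dterm2 : ∀ s : Fin N, DifferentiableAt ℝ (fun v => b i' j' s v • pd s n v) u :=
      fun s => (db u hu i' j' s).smul (dn u hu s)
    rw [h1, pd_add (DifferentiableAt.fun_sum fun s _ => dterm1 s)
      (DifferentiableAt.fun_sum fun s _ => dterm2 s),
      pd_sum _ (fun s _ => dterm1 s), pd_sum _ (fun s _ => dterm2 s)]
    have e1 : ∀ s : Fin N, pd l' (fun v => a i' j' s v • pd s r v) u = 0 := by
      intro s
      rw [pd_smul (da u hu i' j' s) (dr u hu s)]
      have hz1 : pd l' (a i' j' s) u = 0 := by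
        rw [show pd l' (a i' j' s) u = pd l' (fun _ => (0:ℝ)) u from
          pd_congr_on hU hu (fun v hv => haz v hv i' j' s) l', pd_const]
      rw [hz1, haz u hu i' j' s]; simp
    have e2 : ∀ s : Fin N, pd l' (fun v => b i' j' s v • pd s n v) u
        = (pd l' (b i' j' s) u) • pd s n u
          + ∑ m, (b i' j' s u * c l' s m u) • pd m r u := by
      intro s
      rw [pd_smul (db u hu i' j' s) (dn u hu s)]
      congr 1
      have hw : pd l' (pd s n) u = ∑ m, c l' s m u • pd m r u := by
        rw [hWeingarten u hu l' s]
        have hzd : ∀ m, d l' s m u = 0 := fun m => hdz u hu l' s m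
        simp [hzd]
      rw [hw, Finset.smul_sum]
      exact Finset.sum_congr rfl fun m _ => smul_smul _ _ _
    simp only [e1, e2]
    rw [Finset.sum_const_zero, zero_add, Finset.sum_add_distrib, add_comm]
    congr 1
    rw [Finset.sum_comm]
    exact Finset.sum_congr rfl fun m _ => (Finset.sum_smul).symm
  -- equality of mixed third derivatives gives the key quadratic relation
  have hE : ∀ i' j' l' m, (∑ s, b i' j' s u * c l' s m u)
      = ∑ s, b l' j' s u * c i' s m u := by
    intro i' j' l' m
    have hsw : pd l' (pd i' (pd j' r)) u = pd i' (pd l' (pd j' r)) u :=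
      pd_comm hU hu (hpdr j') l' i'
    have h0 : ((∑ p, ((∑ s, b i' j' s u * c l' s p u) - ∑ s, b l' j' s u * c i' s p u)
          • pd p r u)
        + ∑ p, ((pd l' (b i' j' p) u) - (pd i' (b l' j' p) u)) • pd p n u) = 0 := by
      simp only [sub_smul]
      rw [Finset.sum_sub_distrib, Finset.sum_sub_distrib, sub_add_sub_comm, sub_eq_zero,
        ← key3 l' i' j', ← key3 i' l' j']
      exact hsw
    exact sub_eq_zero.mp ((huniq u hu _ _ h0).1 m)
  -- replace c by b
  have hF : ∀ i' j' l' m, (∑ s, b i' j' s u * b l' s m u)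
      = ∑ s, b l' j' s u * b i' s m u := by
    intro i' j' l' m
    have h := hE i' j' l' m
    have hrw : ∀ x y s : Fin N, b x s m u = -c₀ * c x s m u := fun x y s => hbc u hu x s m
    have h2 : ∑ s, b i' j' s u * b l' s m u
        = -c₀ * ∑ s, b i' j' s u * c l' s m u := by
      rw [Finset.mul_sum]
      exact Finset.sum_congr rfl fun s _ => by rw [hbc u hu l' s m]; ring
    have h3 : ∑ s, b l' j' s u * b i' s m u
        = -c₀ * ∑ s, b l' j' s u * c i' s m u := by
      rw [Finset.mul_sum]
      exact Finset.sum_congr rfl fun s _ => by rw [hbc u hu i' s m]; ring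
    rw [h2, h3, h]
  -- final algebra
  have hbs : ∀ i' j' s, b i' j' s u = b j' i' s u := fun i' j' s => (hsym_ab u hu i' j' s).2
  calc ∑ s, b i j s u * b s l k u
      = ∑ s, b i j s u * b l s k u :=
        Finset.sum_congr rfl fun s _ => by rw [hbs s l k]
    _ = ∑ s, b j i s u * b l s k u :=
        Finset.sum_congr rfl fun s _ => by rw [hbs i j s]
    _ = ∑ s, b l i s u * b j s k u := hF j i l k
    _ = ∑ s, b i l s u * b j s k u :=
        Finset.sum_congr rfl fun s _ => by rw [hbs l i s]
    _ = ∑ s, b i l s u * b s j k u :=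
        Finset.sum_congr rfl fun s _ => by rw [hbs j s k]
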